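/- Let u⁻ be locally semiconcave and u⁺ locally semiconvex on an open set Ω ⊂ ℝⁿ, and set B = u⁻ - u⁺ (so B is locally semiconcave). If B attains a local minimum at x ∈ Ω, then both u⁻ and u⁺ are differentiable at x and Du⁻(x) = Du⁺(x). -/

import Mathlib

/-!
At a local minimum `x` of `u⁻ - u⁺`, subtracting the quadratic part of the semiconcavity
modulus makes `u⁻` concave and `u⁺` convex near `x`, so Hahn–Banach gives linear maps `φ, ψ`
with `u⁻ ≤ u⁻ x + φ + C‖· - x‖²` and `u⁺ ≥ u⁺ x + ψ - C‖· - x‖²`. Minimality squeezes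
`(ψ - φ)(y - x) ≤ 2C‖y - x‖²`, forcing `ψ = φ`; then both increments are pinned within
`C‖y - x‖²` of `φ (y - x)`, which is differentiability.
-/

open RealInnerProductSpace
open Set

/-- The (Dini) superdifferential of `u` at `x`, relative to `Ω`. -/
def superdiffOn {n : ℕ} (u : EuclideanSpace ℝ (Fin n) → ℝ) (Ω : Set (EuclideanSpace ℝ (Fin n)))
    (x : EuclideanSpace ℝ (Fin n)) : Set (EuclideanSpace ℝ (Fin n)) :=
  {p | ∀ ε > 0, ∃ δ > 0, ∀ y ∈ Ω, ‖y - x‖ < δ → u y - u x - ⟪p, y - x⟫ ≤ ε * ‖y - x‖}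

/-- `v` is locally semiconcave (with linear modulus) on the open set `Ω`. -/
def LocallySemiconcaveOn {n : ℕ} (v : EuclideanSpace ℝ (Fin n) → ℝ)
    (Ω : Set (EuclideanSpace ℝ (Fin n))) : Prop :=
  ∀ z ∈ Ω, ∃ C : ℝ, ∃ δ > 0, Metric.ball z δ ⊆ Ω ∧
    ∀ x ∈ Metric.ball z δ, ∀ y ∈ Metric.ball z δ, ∀ lam ∈ Icc (0 : ℝ) 1,
      lam * v x + (1 - lam) * v y - v (lam • x + (1 - lam) • y)
        ≤ C / 2 * lam * (1 - lam) * ‖x - y‖ ^ 2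

open Filter Topology Asymptotics

section NormedSpace

variable {E : Type*} [NormedAddCommGroup E] [NormedSpace ℝ E]

theorem hasFDerivAt_of_abs_le_sq {f : E → ℝ} {φ : E →L[ℝ] ℝ} {x : E} {C : ℝ}
    (h : ∀ᶠ y in 𝓝 x, |f y - f x - φ (y - x)| ≤ C * ‖y - x‖ ^ 2) : HasFDerivAt f φ x := by
  refine hasFDerivAt_iff_isLittleO.2 <|
    (IsBigO.of_bound C ?_).trans_isLittleO (isLittleO_pow_sub_sub x one_lt_two)
  simpa using h

theorem ContinuousLinearMap.eq_zero_of_eventually_le_sq {φ : E →L[ℝ] ℝ} {x : E} {C : ℝ}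
    (h : ∀ᶠ y in 𝓝 x, φ (y - x) ≤ C * ‖y - x‖ ^ 2) : φ = 0 := by
  have hderiv : HasFDerivAt (fun y => φ (y - x) - C * ‖y - x‖ ^ 2) φ x :=
    hasFDerivAt_of_abs_le_sq (C := |C|) (.of_forall fun y => by simp [abs_mul])
  refine IsLocalMax.hasFDerivAt_eq_zero (h.mono fun y hy => ?_) hderiv
  simpa using hy

theorem hasFDerivAt_of_isLocalMin_sub {f g : E → ℝ} {φ ψ : E →L[ℝ] ℝ} {x : E} {C : ℝ}
    (hf : ∀ᶠ y in 𝓝 x, f y ≤ f x + φ (y - x) + C * ‖y - x‖ ^ 2)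
    (hg : ∀ᶠ y in 𝓝 x, -g y ≤ -g x + ψ (y - x) + C * ‖y - x‖ ^ 2)
    (hmin : IsLocalMin (fun y => f y - g y) x) : HasFDerivAt f φ x ∧ HasFDerivAt g φ x := by
  obtain rfl : ψ = -φ := by
    refine eq_neg_of_add_eq_zero_right (neg_eq_zero.1 ?_)
    refine ContinuousLinearMap.eq_zero_of_eventually_le_sq (x := x) (C := 2 * C) ?_
    filter_upwards [hf, hg, hmin] with y hfy hgy hmy
    simp only [neg_apply, add_apply]
    linarith
  constructor <;> refine hasFDerivAt_of_abs_le_sq (C := C) ?_ <;>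
    filter_upwards [hf, hg, hmin] with y hfy hgy hmy <;>
    simp only [neg_apply] at hgy <;>
    exact abs_le.2 ⟨by linarith, by linarith⟩

theorem ConcaveOn.exists_supergradient {s : Set E} {f : E → ℝ} {x : E} (hf : ConcaveOn ℝ s f)
    (hs : IsOpen s) (hfc : ContinuousOn f s) (hx : x ∈ s) :
    ∃ φ : E →L[ℝ] ℝ, ∀ y ∈ s, f y ≤ f x + φ (y - x) := by
  set S : Set (E × ℝ) := {q | q.1 ∈ s ∧ q.2 < f q.1}
  have hSo : IsOpen S := by
    have hF : ContinuousOn (fun q : E × ℝ => (q.2, f q.1)) (s ×ˢ univ) :=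
      continuousOn_snd.prodMk (hfc.comp continuousOn_fst fun q hq => hq.1)
    convert hF.isOpen_inter_preimage (hs.prod isOpen_univ) (isOpen_lt continuous_fst continuous_snd)
      using 1
    ext q
    simp [S]
  -- Separate `(x, f x)` from the open strict hypograph; the separating functional has positive
  -- vertical component `c`, and `-ℓ / c` is a supergradient.
  obtain ⟨L, hL⟩ := geometric_hahn_banach_open_point (x := (x, f x)) hf.convex_strict_hypograph
    hSo fun h => lt_irrefl _ h.2
  set ℓ := L.comp (ContinuousLinearMap.inl ℝ E ℝ)
  set c := L (0, 1)
  have hL_apply (y : E) (t : ℝ) : L (y, t) = ℓ y + t * c := by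
    have hyt : ((y, t) : E × ℝ) = (y, 0) + t • (0, 1) := by simp
    rw [hyt, map_add, map_smul, smul_eq_mul]
    rfl
  have hc : 0 < c := by
    have := hL (x, f x - 1) ⟨hx, by linarith⟩
    rw [hL_apply, hL_apply] at this
    linarith
  refine ⟨-(c⁻¹ • ℓ), fun y hy => ?_⟩
  have hy' : f y ≤ (ℓ x + f x * c - ℓ y) / c := le_of_forall_lt fun t ht => by
    have := hL (y, t) ⟨hy, ht⟩
    rw [hL_apply, hL_apply] at this
    rw [lt_div_iff₀ hc]
    linarith
  simp only [neg_apply, smul_apply, map_sub, smul_eq_mul]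
  field_simp at hy' ⊢
  linarith

end NormedSpace

section InnerProductSpace

variable {E : Type*} [NormedAddCommGroup E] [InnerProductSpace ℝ E] [FiniteDimensional ℝ E]

theorem StrongConcaveOn.exists_le_add_sq {s : Set E} {v : E → ℝ} {C : ℝ} {x : E}
    (hv : StrongConcaveOn s (-C) v) (hs : IsOpen s) (hx : x ∈ s) :
    ∃ φ : E →L[ℝ] ℝ, ∀ y ∈ s, v y ≤ v x + φ (y - x) + C / 2 * ‖y - x‖ ^ 2 := by
  have hconc := strongConcaveOn_iff_convex.1 hv
  obtain ⟨ψ, hψ⟩ := hconc.exists_supergradient hs (hconc.continuousOn hs) hx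
  refine ⟨ψ + C • innerSL ℝ x, fun y hy => ?_⟩
  have hsq : ‖y‖ ^ 2 = ‖x‖ ^ 2 + 2 * ⟪x, y - x⟫ + ‖y - x‖ ^ 2 := by
    simpa using norm_add_sq_real x (y - x)
  have := hψ y hy
  simp only [add_apply, smul_apply, innerSL_apply_apply, smul_eq_mul]
  linear_combination this + C / 2 * hsq

end InnerProductSpace

theorem LocallySemiconcaveOn.exists_strongConcaveOn_ball {n : ℕ}
    {v : EuclideanSpace ℝ (Fin n) → ℝ} {Ω : Set (EuclideanSpace ℝ (Fin n))}
    (hv : LocallySemiconcaveOn v Ω) {z : EuclideanSpace ℝ (Fin n)} (hz : z ∈ Ω) :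
    ∃ C, ∃ δ > 0, StrongConcaveOn (Metric.ball z δ) (-C) v := by
  obtain ⟨C, δ, hδ, -, hC⟩ := hv z hz
  refine ⟨C, δ, hδ, convex_ball z δ, fun x hx y hy a b ha hb hab => ?_⟩
  obtain rfl : b = 1 - a := by linarith
  have := hC x hx y hy a ⟨ha, by linarith⟩
  simp only [smul_eq_mul]
  linear_combination this

theorem barrier_local_min_differentiable_general {n : ℕ}
    (Ω : Set (EuclideanSpace ℝ (Fin n)))
    (uminus uplus : EuclideanSpace ℝ (Fin n) → ℝ)
    (hconc : LocallySemiconcaveOn uminus Ω)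
    (hconv : LocallySemiconcaveOn (fun x => -uplus x) Ω)
    (B : EuclideanSpace ℝ (Fin n) → ℝ) (hB : ∀ x, B x = uminus x - uplus x)
    (x : EuclideanSpace ℝ (Fin n)) (hx : x ∈ Ω)
    (hmin : IsLocalMin B x) :
    ∃ p : EuclideanSpace ℝ (Fin n), HasGradientAt uminus p x ∧ HasGradientAt uplus p x := by
  obtain ⟨C₁, δ₁, hδ₁, h₁⟩ := hconc.exists_strongConcaveOn_ball hx
  obtain ⟨C₂, δ₂, hδ₂, h₂⟩ := hconv.exists_strongConcaveOn_ball hx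
  obtain ⟨φ, hφ⟩ := (h₁.mono (neg_le_neg (le_max_left C₁ C₂))).exists_le_add_sq
    Metric.isOpen_ball (Metric.mem_ball_self hδ₁)
  obtain ⟨ψ, hψ⟩ := (h₂.mono (neg_le_neg (le_max_right C₁ C₂))).exists_le_add_sq
    Metric.isOpen_ball (Metric.mem_ball_self hδ₂)
  obtain rfl : B = fun y => uminus y - uplus y := funext hB
  obtain ⟨h_minus, h_plus⟩ := hasFDerivAt_of_isLocalMin_sub
    (eventually_of_mem (Metric.ball_mem_nhds x hδ₁) hφ)
    (eventually_of_mem (Metric.ball_mem_nhds x hδ₂) hψ) hmin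
  refine ⟨(InnerProductSpace.toDual ℝ _).symm φ, ?_, ?_⟩
  · simpa [hasGradientAt_iff_hasFDerivAt] using h_minus
  · simpa [hasGradientAt_iff_hasFDerivAt] using h_plus

/-- If `B = u⁻ - u⁺` (`u⁻` locally semiconcave, `u⁺` locally semiconvex) attains a local
minimum at `x ∈ Ω`, then both `u⁻` and `u⁺` are differentiable at `x` with the same
gradient. -/
theorem barrier_local_min_differentiable {n : ℕ}
    (Ω : Set (EuclideanSpace ℝ (Fin n))) (hΩo : IsOpen Ω)
    (uminus uplus : EuclideanSpace ℝ (Fin n) → ℝ)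
    (hconc : LocallySemiconcaveOn uminus Ω)
    (hconv : LocallySemiconcaveOn (fun x => -uplus x) Ω)
    (B : EuclideanSpace ℝ (Fin n) → ℝ) (hB : ∀ x, B x = uminus x - uplus x)
    (x : EuclideanSpace ℝ (Fin n)) (hx : x ∈ Ω)
    (hmin : IsLocalMin B x) :
    ∃ p : EuclideanSpace ℝ (Fin n), HasGradientAt uminus p x ∧ HasGradientAt uplus p x :=
  barrier_local_min_differentiable_general Ω uminus uplus hconc hconv B hB x hx hmin
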